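/- arXiv:1507.05539 — 3 statements merged into one kernel-verified Lean document; each statement's English description precedes it below -/
import Mathlib

section
/- Let ≺ be a strict partial order on N × ℕ, where N is finite and nonempty, generated by local edges (x,s) ≺ (x,s+1), message edges, and transitivity. If every pair (y,t) has only finitely many incoming message edges, then ≺ is well-founded, i.e., every pair (x,s) has only finitely many ≺-predecessors. -/
/-- The happens-before relation on (node, timestamp) pairs: the smallest relation
containing all local edges `(x,s) ≺ (x,s+1)`, all message edges in `E`, and
closed under transitivity. -/
inductive HB {N : Type} (E : N × ℕ → N × ℕ → Prop) : N × ℕ → N × ℕ → Prop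
  | loc (x : N) (s : ℕ) : HB E (x, s) (x, s + 1)
  | msg {p q : N × ℕ} : E p q → HB E p q
  | trans {p q r : N × ℕ} : HB E p q → HB E q r → HB E p r

/-- One-step edge relation: message edge or local edge. -/
def Step {N : Type} (E : N × ℕ → N × ℕ → Prop) (p q : N × ℕ) : Prop :=
  E p q ∨ (p.1 = q.1 ∧ p.2 + 1 = q.2)

lemma step_hb {N : Type} {E : N × ℕ → N × ℕ → Prop} {p q : N × ℕ}
    (h : Step E p q) : HB E p q := by
  rcases h with h | ⟨h1, h2⟩
  · exact HB.msg h
  · have hq : q = (p.1, p.2 + 1) := Prod.ext h1.symm h2.symm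
    subst hq
    exact HB.loc p.1 p.2

lemma hb_iff_transGen {N : Type} (E : N × ℕ → N × ℕ → Prop) (p q : N × ℕ) :
    HB E p q ↔ Relation.TransGen (Step E) p q := by
  constructor
  · intro h
    induction h with
    | loc x s => exact Relation.TransGen.single (Or.inr ⟨rfl, rfl⟩)
    | msg h => exact Relation.TransGen.single (Or.inl h)
    | trans _ _ ih1 ih2 => exact ih1.trans ih2
  · intro h
    induction h with
    | single h => exact step_hb h
    | tail _ h ih => exact ih.trans (step_hb h)

lemma hb_local {N : Type} (E : N × ℕ → N × ℕ → Prop) (x : N) {s t : ℕ} (h : s < t) :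
    HB E (x, s) (x, t) := by
  induction t with
  | zero => omega
  | succ t ih =>
    rcases Nat.lt_succ_iff_lt_or_eq.mp h with h' | h'
    · exact (ih h').trans (HB.loc x t)
    · subst h'; exact HB.loc x s

lemma hb_wf {N : Type} [Fintype N] (E : N × ℕ → N × ℕ → Prop)
    (hirr : Irreflexive (HB E)) : WellFounded (HB E) := by
  have hins1 : IsIrrefl (N × ℕ) (HB E) := ⟨hirr⟩
  have hins2 : IsTrans (N × ℕ) (HB E) := ⟨fun _ _ _ => HB.trans⟩
  have hins3 : IsStrictOrder (N × ℕ) (HB E) := { }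
  rw [RelEmbedding.wellFounded_iff_isEmpty]
  constructor
  intro emb
  set f : ℕ → N × ℕ := fun n => emb n with hf
  have hHB : ∀ {n m : ℕ}, n < m → HB E (f m) (f n) := fun h =>
    emb.map_rel_iff.mpr h
  have hinj : Function.Injective f := by
    intro a b hab
    by_contra hne
    rcases Nat.lt_or_ge a b with h | h
    · exact hirr _ (hab ▸ hHB h)
    · have h' : b < a := lt_of_le_of_ne h (Ne.symm hne)
      exact hirr _ (hab ▸ hHB h')
  -- some node appears infinitely often
  obtain ⟨x, hx⟩ := Finite.exists_infinite_fiber (fun n => (f n).1)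
  have hI : ((fun n => (f n).1) ⁻¹' {x}).Infinite := Set.infinite_coe_iff.mp hx
  set I := (fun n => (f n).1) ⁻¹' {x} with hIdef
  obtain ⟨n1, hn1⟩ := hI.nonempty
  set t1 := (f n1).2 with ht1
  have hinjOn : Set.InjOn (fun n => (f n).2) I := by
    intro a ha b hb hab
    apply hinj
    have : (f a).1 = (f b).1 := by
      simp only [hIdef, Set.mem_preimage, Set.mem_singleton_iff] at ha hb
      rw [ha, hb]
    exact Prod.ext this hab
  have hKfin : {n ∈ I | (f n).2 ≤ t1}.Finite := by
    apply Set.Finite.of_finite_image _ (hinjOn.mono (Set.sep_subset _ _))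
    apply (Set.finite_Iic t1).subset
    rintro _ ⟨n, ⟨_, hn⟩, rfl⟩
    exact hn
  have hJ : (I \ ({n ∈ I | (f n).2 ≤ t1} ∪ Set.Iic n1)).Infinite :=
    hI.diff (hKfin.union (Set.finite_Iic n1))
  obtain ⟨n2, hn2⟩ := hJ.nonempty
  obtain ⟨hn2I, hn2r⟩ := hn2
  simp only [Set.mem_union, Set.mem_sep_iff, Set.mem_Iic, not_or, not_and, not_le] at hn2r
  have ht2 : t1 < (f n2).2 := hn2r.1 hn2I
  have hlt : n1 < n2 := hn2r.2
  have hx1 : (f n1).1 = x := hn1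
  have hx2 : (f n2).1 = x := hn2I
  have h1 : HB E (f n2) (f n1) := hHB hlt
  have h2 : HB E (f n1) (f n2) := by
    have e1 : f n1 = (x, t1) := Prod.ext hx1 rfl
    have e2 : f n2 = (x, (f n2).2) := Prod.ext hx2 rfl
    rw [e1, e2]
    exact hb_local E x ht2
  exact hirr _ (h1.trans h2)

/-- If the happens-before relation is a strict partial order (irreflexive) and every
pair has only finitely many incoming message edges, then it is well-founded in the
sense that every pair has only finitely many predecessors. -/
theorem stmt3 {N : Type} [Fintype N] [Nonempty N]
    (E : N × ℕ → N × ℕ → Prop)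
    (hirr : Irreflexive (HB E))
    (hfinmsg : ∀ q : N × ℕ, {p | E p q}.Finite) :
    ∀ q : N × ℕ, {p | HB E p q}.Finite := by
  have hwf := hb_wf E hirr
  intro q
  induction q using hwf.induction with
  | _ q ih =>
    have hD : {p | Step E p q}.Finite := by
      apply ((hfinmsg q).insert (q.1, q.2 - 1)).subset
      rintro p (hp | ⟨h1, h2⟩)
      · exact Set.mem_insert_of_mem _ hp
      · left
        exact Prod.ext h1 (by omega)
    have hsub : {p | HB E p q} ⊆ ⋃ d ∈ {p | Step E p q}, insert d {p | HB E p d} := by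
      intro p hp
      rw [Set.mem_setOf_eq, hb_iff_transGen] at hp
      cases hp with
      | single h =>
        exact Set.mem_biUnion h (Set.mem_insert _ _)
      | tail hpd hdq =>
        refine Set.mem_biUnion hdq (Set.mem_insert_of_mem _ ?_)
        rw [Set.mem_setOf_eq, hb_iff_transGen]
        exact hpd
    exact (hD.biUnion fun d hd => (ih d (step_hb hd)).insert d).subset hsub
end

section
/- Every well-founded strict partial order on a countable set can be extended to a well-founded strict total order, i.e., a strict total order in which every element has only finitely many predecessors. -/
/-!
Choose an injection `g : A → ℕ` and send `a` to the binary number `∑ 2 ^ g b`, the sum running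
over `b = a` and the `r`-predecessors of `a`. Distinct elements have distinct down-sets, distinct
finite sets of naturals have distinct binary sums, and `r a b` makes the down-set of `a` a
proper subset of that of `b`, which strictly increases the sum. Pulling back `<` on `ℕ` along this
injective code gives the required total order, and every element has only finitely many
predecessors because a natural number does.
-/

open Finset Function

theorem Finset.exists_injective_strictMono_nat (α : Type*) [Countable α] :
    ∃ F : Finset α → ℕ, Injective F ∧ StrictMono F := by
  obtain ⟨g, hg⟩ := Countable.exists_injective_nat α
  refine ⟨fun s => ∑ i ∈ s.map ⟨g, hg⟩, 2 ^ i,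
    (geomSum_injective le_rfl).comp (map_injective _), fun s t hst => ?_⟩
  exact (geomSum_lt_geomSum_iff_toColex_lt_toColex le_rfl).2
    (Colex.toColex_lt_toColex_of_ssubset (map_ssubset_map.2 hst))

section ReflPreds

variable {A : Type*} {r : A → A → Prop} (hfin : ∀ a, {b | r b a}.Finite)

noncomputable def reflPreds (a : A) : Finset A := ((hfin a).insert a).toFinset

theorem mem_reflPreds {a b : A} : b ∈ reflPreds hfin a ↔ b = a ∨ r b a := by
  simp [reflPreds]

variable {hfin}

theorem reflPreds_injective (hirr : Irreflexive r) (htrans : Transitive r) :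
    Injective (reflPreds hfin) := by
  intro a b h
  have ha : a = b ∨ r a b := (mem_reflPreds hfin).1 (h ▸ (mem_reflPreds hfin).2 (.inl rfl))
  have hb : b = a ∨ r b a := (mem_reflPreds hfin).1 (h ▸ (mem_reflPreds hfin).2 (.inl rfl))
  rcases ha with rfl | hab
  · rfl
  rcases hb with rfl | hba
  · rfl
  exact (hirr a (htrans hab hba)).elim

theorem reflPreds_ssubset_of_rel (hirr : Irreflexive r) (htrans : Transitive r) {a b : A}
    (hab : r a b) : reflPreds hfin a ⊂ reflPreds hfin b := by
  refine Finset.ssubset_iff_subset_ne.2 ⟨fun c hc => ?_, fun h => ?_⟩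
  · rcases (mem_reflPreds hfin).1 hc with rfl | hca
    exacts [(mem_reflPreds hfin).2 (.inr hab), (mem_reflPreds hfin).2 (.inr (htrans hca hab))]
  · have hb : b ∈ reflPreds hfin a := h ▸ (mem_reflPreds hfin).2 (.inl rfl)
    rcases (mem_reflPreds hfin).1 hb with hba | hba
    exacts [hirr a (hba ▸ hab), hirr a (htrans hab hba)]

end ReflPreds

/-- Every strict partial order on a countable set in which each element has only
finitely many predecessors can be extended to a strict total order in which each
element still has only finitely many predecessors. -/
theorem stmt4 {A : Type} [Countable A] (r : A → A → Prop)
    (hirr : Irreflexive r) (htrans : Transitive r)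
    (hfin : ∀ a : A, {b | r b a}.Finite) :
    ∃ s : A → A → Prop,
      (∀ a b : A, r a b → s a b) ∧
      IsStrictTotalOrder A s ∧
      ∀ a : A, {b | s b a}.Finite := by
  obtain ⟨F, hF_inj, hF_mono⟩ := Finset.exists_injective_strictMono_nat A
  set code : A → ℕ := F ∘ reflPreds hfin
  have hcode : Injective code := hF_inj.comp (reflPreds_injective hirr htrans)
  refine ⟨(· < ·) on code, fun a b hab => hF_mono (reflPreds_ssubset_of_rel hirr htrans hab),
    hcode.isStrictTotalOrder_onFun (· < ·), fun a => ?_⟩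
  exact (Set.finite_Iio (code a)).preimage hcode.injOn
end

section
/- For a stratifiable Datalog¬ program P evaluated under stratified semantics on input I, the stable model semantics agrees: the stratified output P(I) is a stable model of P on I. -/
/-- An atom: a relation name applied to a list of terms (variables or constants). -/
structure DAtom (Rel Var U : Type) where
  rel : Rel
  args : List (Var ⊕ U)

/-- A Datalog¬ rule: a head atom, positive body atoms, and negative body atoms. -/
structure DRule (Rel Var U : Type) where
  head : DAtom Rel Var U
  pos : List (DAtom Rel Var U)
  neg : List (DAtom Rel Var U)

/-- A fact: a relation name with a tuple of data values. -/
abbrev DFact (Rel U : Type) := Rel × List U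

/-- The variables occurring in an atom. -/
def atomVars {Rel Var U : Type} (a : DAtom Rel Var U) : Set Var :=
  {v | Sum.inl v ∈ a.args}

/-- Safety: every variable of the rule occurs in some positive body atom. -/
def DRule.safe {Rel Var U : Type} (r : DRule Rel Var U) : Prop :=
  ∀ v : Var, (v ∈ atomVars r.head ∨ ∃ a ∈ r.neg, v ∈ atomVars a) →
    ∃ a ∈ r.pos, v ∈ atomVars a

/-- Applying a valuation to an atom yields a fact. -/
def applyAtom {Rel Var U : Type} (V : Var → U) (a : DAtom Rel Var U) : DFact Rel U :=
  (a.rel, a.args.map (Sum.elim V id))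

/-- The immediate consequence operator `T_P`: adds all facts derived by satisfying
valuations of rules of `P` on `J`. -/
def Tstep {Rel Var U : Type} (P : Set (DRule Rel Var U)) (J : Set (DFact Rel U)) :
    Set (DFact Rel U) :=
  J ∪ {f | ∃ r ∈ P, ∃ V : Var → U,
    (∀ a ∈ r.pos, applyAtom V a ∈ J) ∧
    (∀ a ∈ r.neg, applyAtom V a ∉ J) ∧
    f = applyAtom V r.head}

/-- The output of `P` on `I`: the union of the iterates of `T_P` starting at `I`. -/
def fixpt {Rel Var U : Type} (P : Set (DRule Rel Var U)) (I : Set (DFact Rel U)) :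
    Set (DFact Rel U) :=
  ⋃ n : ℕ, (Tstep P)^[n] I

/-- The intensional relations of `P`: those appearing in rule heads. -/
def idbRels {Rel Var U : Type} (P : Set (DRule Rel Var U)) : Set Rel :=
  {R | ∃ r ∈ P, r.head.rel = R}

/-- A ground rule: all atoms are facts. -/
structure DGroundRule (Rel U : Type) where
  head : DFact Rel U
  pos : List (DFact Rel U)
  neg : List (DFact Rel U)

/-- The active domain of an instance: all data values occurring in its facts. -/
def adom {Rel U : Type} (I : Set (DFact Rel U)) : Set U :=
  {u | ∃ f ∈ I, u ∈ f.2}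

/-- The variables of a rule. -/
def ruleVars {Rel Var U : Type} (r : DRule Rel Var U) : Set Var :=
  atomVars r.head ∪ {v | ∃ a ∈ r.pos, v ∈ atomVars a} ∪ {v | ∃ a ∈ r.neg, v ∈ atomVars a}

/-- The constants appearing in the rules of `P`. -/
def consts {Rel Var U : Type} (P : Set (DRule Rel Var U)) : Set U :=
  {u | ∃ r ∈ P, ∃ a : DAtom Rel Var U,
    (a = r.head ∨ a ∈ r.pos ∨ a ∈ r.neg) ∧ Sum.inr u ∈ a.args}

/-- The ground program of `P` on `I`: all ground rules obtained by valuations whose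
image on the rule variables is contained in `adom I ∪ consts P`. -/
def groundProg {Rel Var U : Type} (P : Set (DRule Rel Var U)) (I : Set (DFact Rel U)) :
    Set (DGroundRule Rel U) :=
  {g | ∃ r ∈ P, ∃ V : Var → U,
    (∀ v ∈ ruleVars r, V v ∈ adom I ∪ consts P) ∧
    g = ⟨applyAtom V r.head, r.pos.map (applyAtom V), r.neg.map (applyAtom V)⟩}

/-- One step of the (positive) reduct of a ground program `G` with respect to `M`:
rules whose negative body intersects `M` are removed, and the remaining rules fire
on their positive bodies. -/
def TRed {Rel U : Type} (M : Set (DFact Rel U)) (G : Set (DGroundRule Rel U))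
    (J : Set (DFact Rel U)) : Set (DFact Rel U) :=
  J ∪ {f | ∃ g ∈ G, (∀ b ∈ g.neg, b ∉ M) ∧ (∀ b ∈ g.pos, b ∈ J) ∧ f = g.head}

/-- `M` is a stable model of `P` on input `I` if `M` equals the output of the
positive reduct of the ground program of `P` on `I`, applied to `I`. -/
def StableModel {Rel Var U : Type} (P : Set (DRule Rel Var U))
    (I M : Set (DFact Rel U)) : Prop :=
  M = ⋃ n : ℕ, (TRed M (groundProg P I))^[n] I

/-- The rules of `P` whose head relation has stratum number `i`. -/
def stratumProg {Rel Var U : Type} (P : Set (DRule Rel Var U)) (σ : Rel → ℕ)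
    (i : ℕ) : Set (DRule Rel Var U) :=
  {r ∈ P | σ r.head.rel = i}

/-- The stratified output after the first `k` strata: each stratum is evaluated by
the (semi-positive) fixpoint semantics on the output of the previous strata. -/
def stratOut {Rel Var U : Type} (P : Set (DRule Rel Var U)) (σ : Rel → ℕ) :
    ℕ → Set (DFact Rel U) → Set (DFact Rel U)
  | 0, I => I
  | k + 1, I => fixpt (stratumProg P σ (k + 1)) (stratOut P σ k I)

/-!
Write `M` for the stratified output. The stratification conditions make `M` a model of `P`:
a rule whose positive body holds in `M` finds that body already in the stratum of its head,
so it fires when that stratum is evaluated. Any model containing `I` contains the least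
fixpoint of the reduct, whence one inclusion. Conversely, each stratum only consults negated
facts from strictly lower strata, which are already final; so, stratum by stratum, every
firing of a rule is a firing of its ground instance in the reduct with respect to `M`.
-/

open Set Function

section Iterates

variable {α : Type*} {T : Set α → Set α}

theorem monotone_iterate_of_subset (hT : ∀ J, J ⊆ T J) (I : Set α) :
    Monotone fun n => T^[n] I :=
  monotone_nat_of_le_succ fun n => by rw [iterate_succ_apply']; exact hT _

theorem exists_iterate_of_finite_subset_iUnion (hT : ∀ J, J ⊆ T J) {I s : Set α}
    (hs : s.Finite) (h : s ⊆ ⋃ n, T^[n] I) : ∃ N, s ⊆ T^[N] I := by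
  simpa using (monotone_iterate_of_subset hT I).directed_le
    |>.exists_mem_subset_of_finset_subset_biUnion (s := hs.toFinset) (by simpa using h)

end Iterates

section Datalog

variable {Rel Var U : Type}

def DRule.instantiate (r : DRule Rel Var U) (V : Var → U) : DGroundRule Rel U :=
  ⟨applyAtom V r.head, r.pos.map (applyAtom V), r.neg.map (applyAtom V)⟩

def IsModel (P : Set (DRule Rel Var U)) (M : Set (DFact Rel U)) : Prop :=
  ∀ r ∈ P, ∀ V : Var → U, (∀ a ∈ r.pos, applyAtom V a ∈ M) →
    (∀ a ∈ r.neg, applyAtom V a ∉ M) → applyAtom V r.head ∈ M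

theorem iterate_subset_fixpt (Q : Set (DRule Rel Var U)) (B : Set (DFact Rel U)) (m : ℕ) :
    (Tstep Q)^[m] B ⊆ fixpt Q B :=
  subset_iUnion (fun k => (Tstep Q)^[k] B) m

theorem subset_fixpt (Q : Set (DRule Rel Var U)) (B : Set (DFact Rel U)) : B ⊆ fixpt Q B :=
  iterate_subset_fixpt Q B 0

theorem Tstep_fixpt_subset (Q : Set (DRule Rel Var U)) (B : Set (DFact Rel U)) :
    Tstep Q (fixpt Q B) ⊆ fixpt Q B := by
  rintro f (hf | ⟨r, hr, V, hpos, hneg, rfl⟩)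
  · exact hf
  obtain ⟨N, hN⟩ := exists_iterate_of_finite_subset_iUnion (fun _ => subset_union_left)
    ((List.finite_toSet r.pos).image (applyAtom V)) (image_subset_iff.2 hpos)
  refine iterate_subset_fixpt Q B (N + 1) ?_
  rw [iterate_succ_apply']
  exact Or.inr ⟨r, hr, V, fun a ha => hN (mem_image_of_mem _ ha),
    fun a ha h => hneg a ha (iterate_subset_fixpt Q B N h), rfl⟩

theorem TRed_iUnion_iterate_subset (M I : Set (DFact Rel U)) (G : Set (DGroundRule Rel U)) :
    TRed M G (⋃ n, (TRed M G)^[n] I) ⊆ ⋃ n, (TRed M G)^[n] I := by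
  rintro f (hf | ⟨g, hg, hneg, hpos, rfl⟩)
  · exact hf
  obtain ⟨N, hN⟩ := exists_iterate_of_finite_subset_iUnion (fun _ => subset_union_left)
    (List.finite_toSet g.pos) hpos
  refine mem_iUnion_of_mem (N + 1) ?_
  rw [iterate_succ_apply']
  exact Or.inr ⟨g, hg, hneg, hN, rfl⟩

theorem mem_or_exists_head_of_mem_fixpt {Q : Set (DRule Rel Var U)} {B : Set (DFact Rel U)}
    {f : DFact Rel U} (hf : f ∈ fixpt Q B) :
    f ∈ B ∨ ∃ r ∈ Q, ∃ V : Var → U, f = applyAtom V r.head := by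
  obtain ⟨m, hm⟩ := mem_iUnion.1 hf
  induction m generalizing f with
  | zero => exact Or.inl hm
  | succ m ih =>
    rw [iterate_succ_apply'] at hm
    rcases hm with hm | ⟨r, hr, V, -, -, rfl⟩
    · exact ih (iterate_subset_fixpt Q B m hm) hm
    · exact Or.inr ⟨r, hr, V, rfl⟩

theorem iUnion_TRed_groundProg_subset_of_isModel {P : Set (DRule Rel Var U)}
    {I J M : Set (DFact Rel U)} (hJM : J ⊆ M) (hM : IsModel P M) :
    ⋃ m, (TRed M (groundProg P I))^[m] J ⊆ M := by
  refine iUnion_subset fun m => ?_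
  induction m with
  | zero => exact hJM
  | succ m ih =>
    rw [iterate_succ_apply']
    rintro f (hf | ⟨g, ⟨r, hr, V, -, rfl⟩, hneg, hpos, rfl⟩)
    · exact ih hf
    · exact hM r hr V (fun a ha => ih (hpos _ (List.mem_map_of_mem ha)))
        fun a ha => hneg _ (List.mem_map_of_mem ha)

theorem DRule.safe.mem_adom {r : DRule Rel Var U} (hr : r.safe) {V : Var → U}
    {J : Set (DFact Rel U)} (hpos : ∀ a ∈ r.pos, applyAtom V a ∈ J) {v : Var}
    (hv : v ∈ ruleVars r) : V v ∈ adom J := by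
  obtain ⟨a, ha, hva⟩ : ∃ a ∈ r.pos, v ∈ atomVars a := by
    rcases hv with (hv | hv) | hv
    exacts [hr v (Or.inl hv), hv, hr v (Or.inr hv)]
  exact ⟨applyAtom V a, hpos a ha, List.mem_map_of_mem (f := Sum.elim V id) hva⟩

theorem consts_mono {Q P : Set (DRule Rel Var U)} (hQP : Q ⊆ P) : consts Q ⊆ consts P :=
  fun _ ⟨r, hr, h⟩ => ⟨r, hQP hr, h⟩

theorem adom_Tstep_subset {Q : Set (DRule Rel Var U)} (hsafe : ∀ r ∈ Q, r.safe)
    (J : Set (DFact Rel U)) : adom (Tstep Q J) ⊆ adom J ∪ consts Q := by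
  rintro u ⟨f, hf | ⟨r, hr, V, hpos, -, rfl⟩, hu⟩
  · exact Or.inl ⟨f, hf, hu⟩
  obtain ⟨v | c, ht, rfl⟩ := List.mem_map.1 hu
  · exact Or.inl ((hsafe r hr).mem_adom hpos (Or.inl (Or.inl ht)))
  · exact Or.inr ⟨r, hr, r.head, Or.inl rfl, ht⟩

theorem adom_fixpt_subset {Q : Set (DRule Rel Var U)} (hsafe : ∀ r ∈ Q, r.safe)
    (B : Set (DFact Rel U)) : adom (fixpt Q B) ⊆ adom B ∪ consts Q := by
  have hiter : ∀ m, adom ((Tstep Q)^[m] B) ⊆ adom B ∪ consts Q := by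
    intro m
    induction m with
    | zero => exact subset_union_left
    | succ m ih =>
      rw [iterate_succ_apply']
      exact (adom_Tstep_subset hsafe _).trans (union_subset ih subset_union_right)
  rintro u ⟨f, hf, hu⟩
  obtain ⟨m, hm⟩ := mem_iUnion.1 hf
  exact hiter m ⟨f, hm, hu⟩

end Datalog

section Stratification

variable {Rel Var U : Type} {P : Set (DRule Rel Var U)} {σ : Rel → ℕ} {I : Set (DFact Rel U)}

theorem stratOut_mono : Monotone fun k => stratOut P σ k I :=
  monotone_nat_of_le_succ fun _ => subset_fixpt _ _

theorem mem_stratOut_of_le {f : DFact Rel U} {m k : ℕ} (hf : f ∈ stratOut P σ m I)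
    (hk : f.1 ∈ idbRels P → σ f.1 ≤ k) : f ∈ stratOut P σ k I := by
  induction m with
  | zero => exact stratOut_mono (Nat.zero_le k) hf
  | succ m ih =>
    rcases mem_or_exists_head_of_mem_fixpt hf with hf | ⟨r, ⟨hr, hrm⟩, V, rfl⟩
    · exact ih hf
    · have hmk : m + 1 ≤ k := hrm ▸ hk ⟨r, hr, rfl⟩
      exact stratOut_mono hmk hf

theorem adom_stratOut_subset (hsafe : ∀ r ∈ P, r.safe) (k : ℕ) :
    adom (stratOut P σ k I) ⊆ adom I ∪ consts P := by
  induction k with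
  | zero => exact subset_union_left
  | succ k ih =>
    exact (adom_fixpt_subset (fun r hr => hsafe r hr.1) _).trans
      (union_subset ih (subset_union_of_subset_right (consts_mono (sep_subset _ _)) _))

theorem isModel_stratOut {n : ℕ}
    (hrange : ∀ r ∈ P, 1 ≤ σ r.head.rel ∧ σ r.head.rel ≤ n)
    (hposstrat : ∀ r ∈ P, ∀ a ∈ r.pos, a.rel ∈ idbRels P → σ a.rel ≤ σ r.head.rel) :
    IsModel P (stratOut P σ n I) := by
  intro r hr V hpos hneg
  obtain ⟨hlow, hhigh⟩ := hrange r hr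
  obtain ⟨j, hj⟩ : ∃ j, σ r.head.rel = j + 1 := ⟨_, (Nat.succ_pred_eq_of_pos hlow).symm⟩
  have hsub : stratOut P σ (j + 1) I ⊆ stratOut P σ n I := stratOut_mono (hj ▸ hhigh)
  refine hsub (Tstep_fixpt_subset _ _ (Or.inr ⟨r, ⟨hr, hj⟩, V, fun a ha => ?_,
    fun a ha h => hneg a ha (hsub h), rfl⟩))
  exact mem_stratOut_of_le (hpos a ha) fun hidb => hj ▸ hposstrat r hr a ha hidb

theorem stratOut_subset_iUnion_TRed (hsafe : ∀ r ∈ P, r.safe)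
    (hnegstrat : ∀ r ∈ P, ∀ a ∈ r.neg, a.rel ∈ idbRels P → σ a.rel < σ r.head.rel)
    (n k : ℕ) :
    stratOut P σ k I ⊆ ⋃ m, (TRed (stratOut P σ n I) (groundProg P I))^[m] I := by
  induction k with
  | zero => exact subset_iUnion (fun m => (TRed _ _)^[m] I) 0
  | succ k ih =>
    refine iUnion_subset fun m => ?_
    induction m with
    | zero => exact ih
    | succ m ihm =>
      rw [iterate_succ_apply']
      rintro f (hf | ⟨r, ⟨hr, hrk⟩, V, hpos, hneg, rfl⟩)
      · exact ihm hf
      have hground : r.instantiate V ∈ groundProg P I :=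
        ⟨r, hr, V, fun v hv => adom_stratOut_subset hsafe (k + 1)
          ((hsafe r hr).mem_adom (fun a ha => iterate_subset_fixpt _ _ m (hpos a ha)) hv), rfl⟩
      -- negated facts come from strata `≤ k`, which are final before stratum `k + 1` starts
      have hnegM : ∀ a ∈ r.neg, applyAtom V a ∉ stratOut P σ n I := fun a ha h =>
        hneg a ha <| monotone_iterate_of_subset (fun _ => subset_union_left) _ (Nat.zero_le m) <|
          mem_stratOut_of_le h fun hidb =>
            Nat.lt_succ_iff.1 (hrk ▸ hnegstrat r hr a ha hidb : σ a.rel < k + 1)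
      refine TRed_iUnion_iterate_subset _ _ _ (Or.inr ⟨_, hground, ?_, ?_, rfl⟩)
      · simpa [DRule.instantiate] using hnegM
      · simpa [DRule.instantiate] using fun a ha => ihm (hpos a ha)

end Stratification

/-- For a syntactically stratifiable safe Datalog¬ program, the stratified output is
a stable model of the program on the input. -/
theorem stmt19 {Rel Var U : Type} (P : Set (DRule Rel Var U)) (I : Set (DFact Rel U))
    (σ : Rel → ℕ) (n : ℕ)
    (hsafe : ∀ r ∈ P, r.safe)
    (hrange : ∀ r ∈ P, 1 ≤ σ r.head.rel ∧ σ r.head.rel ≤ n)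
    (hposstrat : ∀ r ∈ P, ∀ a ∈ r.pos, a.rel ∈ idbRels P → σ a.rel ≤ σ r.head.rel)
    (hnegstrat : ∀ r ∈ P, ∀ a ∈ r.neg, a.rel ∈ idbRels P → σ a.rel < σ r.head.rel) :
    StableModel P I (stratOut P σ n I) := by
  exact Subset.antisymm (stratOut_subset_iUnion_TRed hsafe hnegstrat n n)
    (iUnion_TRed_groundProg_subset_of_isModel (stratOut_mono (Nat.zero_le n))
      (isModel_stratOut hrange hposstrat))
end
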